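/- Define the graph D obtained from the complete bipartite join of two 3-element vertex sets B' and B'' by inserting two additional vertices in the interior of each of the 9 edges. Then the automorphism group of D is isomorphic to the semidirect product (ℤ/2) ⋉ (S₃ × S₃), of order 72. -/

import Mathlib

/-- Vertex type of the graph D: the six branch vertices B' ⊔ B'' (each a copy of
`Fin 3`), together with two subdivision vertices `(a, u, false)` (nearer to
a ∈ B') and `(a, u, true)` (nearer to u ∈ B'') on each edge {a, u} of the join
B' ⋆ B''. -/
abbrev V := (Fin 3 ⊕ Fin 3) ⊕ (Fin 3 × Fin 3 × Bool)

/-- One-directional adjacency of D. -/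
def dRel : V → V → Prop := fun v w =>
  match v, w with
  | Sum.inl (Sum.inl a), Sum.inr (a', _, b) => a = a' ∧ b = false
  | Sum.inl (Sum.inr u), Sum.inr (_, u', b) => u = u' ∧ b = true
  | Sum.inr (a, u, b), Sum.inr (a', u', b') => a = a' ∧ u = u' ∧ b ≠ b'
  | _, _ => False

/-- The graph D: the join of B' and B'' with each edge subdivided twice. -/
def D : SimpleGraph V := SimpleGraph.fromRel dRel

/-!
STATEMENT 11: The automorphism group of D is isomorphic to the semidirect
product (ℤ/2) ⋉ (S₃ × S₃), of order 72.
-/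

/-- The partition relation on `Bool × Fin 3`: two elements are related iff they
lie in the same part.  Its automorphism group is canonically the semidirect
product (ℤ/2) ⋉ (S₃ × S₃): the permutations of the 6-element set Bool × Fin 3
preserving the partition into the two 3-element parts or swapping them. -/
def partRel : Bool × Fin 3 → Bool × Fin 3 → Prop := fun x y => x.1 = y.1

/-!
An automorphism of D preserves degrees, so it permutes the six branch vertices (degree 3; the
subdivision vertices have degree 2). Two branch vertices lie in different parts exactly when they are
joined by a walk of length 3, so this permutation preserves the partition B' ⊔ B''; and the second
vertex of that walk is unique, so the permutation determines the automorphism. Conversely every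
partition-preserving permutation of the branch vertices extends along the subdivided edges. Hence
Aut D ≅ Aut(partRel), whose elements are a permutation of the two parts followed by a permutation
within each part: 2 · 3! · 3! = 72 of them.
-/

instance : DecidableRel dRel := fun v w => by
  rcases v with (a | u) | ⟨a, u, b⟩ <;> rcases w with (a' | u') | ⟨a', u', b'⟩ <;>
    dsimp only [dRel] <;> infer_instance

instance : DecidableRel D.Adj := fun v w =>
  decidable_of_iff _ (SimpleGraph.fromRel_adj dRel v w).symm

namespace SimpleGraph

variable {α β : Type*} {G : SimpleGraph α} {H : SimpleGraph β}

def Walk3Via (G : SimpleGraph α) (x w y : α) : Prop :=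
  G.Adj x w ∧ ∃ w', G.Adj w w' ∧ G.Adj w' y

instance [Fintype α] [DecidableRel G.Adj] (x w y : α) : Decidable (G.Walk3Via x w y) := by
  unfold Walk3Via; infer_instance

theorem Iso.walk3Via_iff (e : G ≃g H) {x w y : α} :
    H.Walk3Via (e x) (e w) (e y) ↔ G.Walk3Via x w y := by
  simp only [Walk3Via, e.map_adj_iff, e.surjective.exists]

theorem Iso.exists_walk3Via_iff (e : G ≃g H) {x y : α} :
    (∃ w, H.Walk3Via (e x) w (e y)) ↔ ∃ w, G.Walk3Via x w y := by
  simp only [e.surjective.exists, e.walk3Via_iff]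

end SimpleGraph

def branch : Bool × Fin 3 → V
  | (false, a) => Sum.inl (Sum.inl a)
  | (true, u) => Sum.inl (Sum.inr u)

/-- `subdiv p j` is the subdivision vertex next to `branch p` on the edge from `branch p` to
`branch (!p.1, j)`. -/
def subdiv : Bool × Fin 3 → Fin 3 → V
  | (false, a), j => Sum.inr (a, j, false)
  | (true, u), j => Sum.inr (j, u, true)

def branchLabel : V → Bool × Fin 3
  | Sum.inl (Sum.inl a) => (false, a)
  | Sum.inl (Sum.inr u) => (true, u)
  | Sum.inr _ => (false, 0)

theorem branchLabel_branch : ∀ p, branchLabel (branch p) = p := by decide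

theorem branch_injective : Function.Injective branch :=
  Function.LeftInverse.injective branchLabel_branch

theorem vertex_cases : ∀ v : V, (∃ p, v = branch p) ∨ ∃ p j, v = subdiv p j := by decide

theorem adj_branch_subdiv : ∀ p j, D.Adj (branch p) (subdiv p j) := by decide

theorem adj_subdiv_subdiv : ∀ p j, D.Adj (subdiv p j) (subdiv (!p.1, j) p.2) := by decide

set_option synthInstance.maxSize 2000 in
theorem adj_cases : ∀ v w, D.Adj v w → ∃ p j,
    (v = branch p ∧ w = subdiv p j) ∨ (v = subdiv p j ∧ w = branch p) ∨
      (v = subdiv p j ∧ w = subdiv (!p.1, j) p.2) := by decide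

theorem degree_branch : ∀ p, D.degree (branch p) = 3 := by decide

theorem degree_subdiv : ∀ p j, D.degree (subdiv p j) = 2 := by decide

theorem walk3Via_branch_iff : ∀ p q w,
    D.Walk3Via (branch p) w (branch q) ↔ p.1 ≠ q.1 ∧ w = subdiv p q.2 := by decide

namespace partRel

theorem map_fst_eq_iff (f : partRel ≃r partRel) {p q : Bool × Fin 3} :
    (f p).1 = (f q).1 ↔ p.1 = q.1 :=
  f.map_rel_iff

theorem map_opp (f : partRel ≃r partRel) (p : Bool × Fin 3) (j : Fin 3) :
    f (!p.1, j) = (!(f p).1, (f (!p.1, j)).2) :=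
  Prod.ext (Bool.eq_not_iff.mpr fun h => by simpa using (map_fst_eq_iff f).mp h) rfl

end partRel

def vertexMap (f : Bool × Fin 3 → Bool × Fin 3) : V → V
  | Sum.inl (Sum.inl a) => branch (f (false, a))
  | Sum.inl (Sum.inr u) => branch (f (true, u))
  | Sum.inr (a, u, false) => subdiv (f (false, a)) (f (true, u)).2
  | Sum.inr (a, u, true) => subdiv (f (true, u)) (f (false, a)).2

theorem vertexMap_branch (f : Bool × Fin 3 → Bool × Fin 3) :
    ∀ p, vertexMap f (branch p) = branch (f p)
  | (false, _) | (true, _) => rfl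

theorem vertexMap_subdiv (f : Bool × Fin 3 → Bool × Fin 3) :
    ∀ p j, vertexMap f (subdiv p j) = subdiv (f p) (f (!p.1, j)).2
  | (false, _), _ | (true, _), _ => rfl

theorem vertexMap_id : ∀ v, vertexMap id v = v := by decide

theorem vertexMap_mul (f g : partRel ≃r partRel) (v : V) :
    vertexMap ⇑(f * g) v = vertexMap f (vertexMap g v) := by
  rcases vertex_cases v with ⟨p, rfl⟩ | ⟨p, j, rfl⟩
  · simp only [vertexMap_branch, RelIso.mul_apply]
  · rw [vertexMap_subdiv, vertexMap_subdiv, vertexMap_subdiv, ← partRel.map_opp g p j]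
    rfl

theorem adj_vertexMap (f : partRel ≃r partRel) {v w : V} (h : D.Adj v w) :
    D.Adj (vertexMap f v) (vertexMap f w) := by
  obtain ⟨p, j, ⟨rfl, rfl⟩ | ⟨rfl, rfl⟩ | ⟨rfl, rfl⟩⟩ := adj_cases v w h
  · rw [vertexMap_branch, vertexMap_subdiv]
    exact adj_branch_subdiv _ _
  · rw [vertexMap_branch, vertexMap_subdiv]
    exact (adj_branch_subdiv _ _).symm
  · rw [vertexMap_subdiv, vertexMap_subdiv, partRel.map_opp f p j]
    simpa using adj_subdiv_subdiv (f p) (f (!p.1, j)).2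

theorem vertexMap_inv_apply (f : partRel ≃r partRel) (v : V) : vertexMap ⇑f⁻¹ (vertexMap f v) = v := by
  rw [← vertexMap_mul, inv_mul_cancel]
  exact vertexMap_id v

def inducedAut (f : partRel ≃r partRel) : D ≃g D where
  toFun := vertexMap f
  invFun := vertexMap ⇑f⁻¹
  left_inv := vertexMap_inv_apply f
  right_inv v := by simpa only [inv_inv] using vertexMap_inv_apply f⁻¹ v
  map_rel_iff' {v w} := ⟨fun h => by
    simpa only [Equiv.coe_fn_mk, vertexMap_inv_apply] using adj_vertexMap f⁻¹ h, adj_vertexMap f⟩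

theorem inducedAut_branch (f : partRel ≃r partRel) (p : Bool × Fin 3) :
    inducedAut f (branch p) = branch (f p) :=
  vertexMap_branch f p

def inducedAutHom : (partRel ≃r partRel) →* (D ≃g D) :=
  MonoidHom.mk' inducedAut fun f g => RelIso.ext (vertexMap_mul f g)

theorem inducedAut_injective : Function.Injective inducedAut := fun f g h =>
  RelIso.ext fun p => branch_injective <| by
    rw [← inducedAut_branch, ← inducedAut_branch, h]

theorem exists_branch_eq (e : D ≃g D) (p : Bool × Fin 3) : ∃ q, e (branch p) = branch q := by
  rcases vertex_cases (e (branch p)) with h | ⟨q, j, hq⟩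
  · exact h
  · have hdeg := e.degree_eq (branch p)
    rw [hq, degree_subdiv, degree_branch] at hdeg
    cases hdeg

theorem fst_eq_iff_not_exists_walk3Via {p q : Bool × Fin 3} :
    p.1 = q.1 ↔ ¬∃ w, D.Walk3Via (branch p) w (branch q) := by
  simp only [walk3Via_branch_iff, exists_and_left, exists_eq, and_true, not_not]

theorem eq_one_of_forall_branch (e : D ≃g D) (h : ∀ p, e (branch p) = branch p) : e = 1 := by
  ext v
  rcases vertex_cases v with ⟨p, rfl⟩ | ⟨p, j, rfl⟩
  · exact h p
  · have hw := e.walk3Via_iff.mpr ((walk3Via_branch_iff p (!p.1, j) _).mpr ⟨by simp, rfl⟩)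
    rw [h, h, walk3Via_branch_iff] at hw
    exact hw.2

theorem branch_branchLabel (e : D ≃g D) (p : Bool × Fin 3) :
    branch (branchLabel (e (branch p))) = e (branch p) := by
  obtain ⟨q, hq⟩ := exists_branch_eq e p
  rw [hq, branchLabel_branch]

def branchAut (e : D ≃g D) : partRel ≃r partRel where
  toFun p := branchLabel (e (branch p))
  invFun p := branchLabel (e.symm (branch p))
  left_inv p := by simp only [branch_branchLabel, e.symm_apply_apply, branchLabel_branch]
  right_inv p := by simp only [branch_branchLabel, e.apply_symm_apply, branchLabel_branch]
  map_rel_iff' {p q} := by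
    change (branchLabel (e (branch p))).1 = (branchLabel (e (branch q))).1 ↔ p.1 = q.1
    rw [fst_eq_iff_not_exists_walk3Via, fst_eq_iff_not_exists_walk3Via, branch_branchLabel,
      branch_branchLabel, e.exists_walk3Via_iff]

theorem inducedAut_surjective : Function.Surjective inducedAut := fun e => by
  have hbranch p : inducedAut (branchAut e) (branch p) = e (branch p) :=
    (inducedAut_branch _ p).trans (branch_branchLabel e p)
  refine ⟨branchAut e, inv_mul_eq_one.mp (eq_one_of_forall_branch _ fun p => ?_)⟩
  rw [RelIso.mul_apply, ← hbranch, RelIso.inv_apply_self]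

noncomputable def autEquiv : (partRel ≃r partRel) ≃* (D ≃g D) :=
  MulEquiv.ofBijective inducedAutHom ⟨inducedAut_injective, inducedAut_surjective⟩

def partAut (z : Equiv.Perm Bool × (Bool → Equiv.Perm (Fin 3))) : partRel ≃r partRel :=
  ⟨Equiv.prodShear z.1 z.2, z.1.injective.eq_iff⟩

theorem partAut_injective : Function.Injective partAut := fun z z' h => by
  have happ x : partAut z x = partAut z' x := DFunLike.congr_fun h x
  exact Prod.ext (Equiv.ext fun b => congrArg Prod.fst (happ (b, 0)))
    (funext fun b => Equiv.ext fun i => congrArg Prod.snd (happ (b, i)))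

theorem partAut_surjective : Function.Surjective partAut := fun f => by
  have hfst b i : (f (b, i)).1 = (f (b, 0)).1 := (partRel.map_fst_eq_iff f).mpr rfl
  have hperm : Function.Injective fun b => (f (b, 0)).1 := fun b b' h =>
    (partRel.map_fst_eq_iff f).mp h
  have hperm_part b : Function.Injective fun i => (f (b, i)).2 := fun i i' h =>
    congrArg Prod.snd (f.injective (Prod.ext ((hfst b i).trans (hfst b i').symm) h))
  exact ⟨(Equiv.ofBijective _ hperm.bijective_of_finite,
    fun b => Equiv.ofBijective _ (hperm_part b).bijective_of_finite),
    RelIso.ext fun x => Prod.ext (hfst x.1 x.2).symm rfl⟩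

theorem card_partRel_aut : Nat.card (partRel ≃r partRel) = 72 := by
  rw [← Nat.card_eq_of_bijective partAut ⟨partAut_injective, partAut_surjective⟩]
  simp [Nat.card_eq_fintype_card, Fintype.card_perm, Nat.factorial]

theorem stmt11 :
    Nonempty ((D ≃g D) ≃* (partRel ≃r partRel)) ∧ Nat.card (D ≃g D) = 72 :=
  ⟨⟨autEquiv.symm⟩, by rw [← Nat.card_congr autEquiv.toEquiv, card_partRel_aut]⟩
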